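/- Let p be an odd prime, n ≥ 1, q = p^n, and let F(x) = x^{q − 2} be the inverse power function over GF(q). Let c ∈ GF(q) with c ∉ {0, 1, 4, 4^{-1}}. If χ(c² − 4c)·χ(1 − 4c) = −1 and χ(c) = 1, then the c-differential spectrum of F is given by ω_0 = (q − 3)/2, ω_1 = 4, ω_2 = (q − 7)/2, ω_3 = 1, and ω_i = 0 for i ≥ 4. -/

import Mathlib

open Finset

/-- `cdelta F d c b` is the number of `x` in the finite field `F` with
`(x+1)^d - c * x^d = b`, i.e. the entry `δ_c(b)` of the `c`-DDT of `x ↦ x^d`. -/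
noncomputable def cdelta (F : Type*) [Field F] (d : ℕ) (c b : F) : ℕ :=
  Nat.card {x : F // (x + 1) ^ d - c * x ^ d = b}

/-- `comega F d c i` is the number of `b` in `F` with `δ_c(b) = i`,
i.e. the value `ω_i` of the `c`-differential spectrum of `x ↦ x^d`. -/
noncomputable def comega (F : Type*) [Field F] (d : ℕ) (c : F) (i : ℕ) : ℕ :=
  Nat.card {b : F // cdelta F d c b = i}

open scoped Classical in
/-- The quadratic character of `F`, valued in `ℤ`. -/
noncomputable def chi (F : Type*) [Field F] (x : F) : ℤ :=
  if x = 0 then 0 else if IsSquare x then 1 else -1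

/-! For `x ∉ {0, -1}` the equation `(x + 1)⁻¹ - c x⁻¹ = b` is the quadratic
`b x² + (b + c - 1) x + c = 0`, while `x = 0` and `x = -1` give `b = 1` and `b = c`. Hence `δ_c(b)`
equals the number `g(b)` of square roots of the discriminant `(b - c - 1)² - 4c`, except at `b = 0`
(where `δ_c(0) = 1` but `g(0) = 2`) and at `b = 1`, `b = c` (one extra solution each).
If `c` is a nonzero square, the discriminant vanishes for exactly two `b`, and `∑_b δ_c(b) = q`
forces `∑_b g(b) = q - 1`; this fixes how many `b` have `g(b) = 0` and `g(b) = 2`. The character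
condition says that one of `g(1)`, `g(c)` is `2` and the other `0`, and comparing the level sets of
`δ_c` and `g` on `{0, 1, c}` gives the spectrum. -/

lemma Finset.sum_add_sum_eq_of_eqOn_compl {α M : Type*} [Fintype α] [DecidableEq α]
    [AddCommMonoid M] {u v : α → M} (s : Finset α) (h : ∀ x ∉ s, u x = v x) :
    ∑ x, u x + ∑ x ∈ s, v x = ∑ x, v x + ∑ x ∈ s, u x := by
  rw [← sum_add_sum_compl s u, ← sum_add_sum_compl s v,
    sum_congr rfl fun x hx => h x (mem_compl.1 hx)]
  abel

section SquareRoots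

variable {F : Type*} [Field F] [Fintype F] [DecidableEq F]

def numSqrts (a : F) : ℕ := #{y : F | y ^ 2 = a}

lemma numSqrts_eq_quadraticChar_add_one (hF : ringChar F ≠ 2) (a : F) :
    (numSqrts a : ℤ) = quadraticChar F a + 1 := by
  rw [numSqrts, ← Set.toFinset_ofPred]
  exact quadraticChar_card_sqrts hF a

lemma numSqrts_le_two (hF : ringChar F ≠ 2) (a : F) : numSqrts a ≤ 2 := by
  have h := numSqrts_eq_quadraticChar_add_one hF a
  rcases quadraticChar_isQuadratic F a with h' | h' | h' <;> omega

lemma numSqrts_eq_one_iff (hF : ringChar F ≠ 2) {a : F} : numSqrts a = 1 ↔ a = 0 := by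
  rw [← quadraticChar_eq_zero_iff (F := F), ← Int.natCast_inj,
    numSqrts_eq_quadraticChar_add_one hF]
  omega

lemma numSqrts_of_isSquare (hF : ringChar F ≠ 2) {a : F} (ha : a ≠ 0) (hsq : IsSquare a) :
    numSqrts a = 2 := by
  have h := numSqrts_eq_quadraticChar_add_one hF a
  rw [(quadraticChar_one_iff_isSquare ha).2 hsq] at h
  omega

lemma numSqrts_eq_two_or_zero_of_quadraticChar_mul_eq_neg_one (hF : ringChar F ≠ 2) {a b : F}
    (h : quadraticChar F a * quadraticChar F b = -1) :
    numSqrts a = 2 ∧ numSqrts b = 0 ∨ numSqrts a = 0 ∧ numSqrts b = 2 := by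
  have ha := numSqrts_eq_quadraticChar_add_one hF a
  have hb := numSqrts_eq_quadraticChar_add_one hF b
  rcases quadraticChar_isQuadratic F a with h' | h' | h' <;>
    rcases quadraticChar_isQuadratic F b with h'' | h'' | h'' <;>
    simp only [h', h''] at h ha hb <;> omega

lemma card_quadratic_roots (h2 : (2 : F) ≠ 0) {a b c : F} (ha : a ≠ 0) :
    #{x : F | a * x ^ 2 + b * x + c = 0} = numSqrts (discrim a b c) := by
  have h2a : 2 * a ≠ 0 := mul_ne_zero h2 ha
  rw [numSqrts]
  refine card_equiv ((Equiv.mulLeft₀ _ h2a).trans (Equiv.addRight b)) fun x => ?_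
  simp only [mem_filter_univ, Equiv.trans_apply, Equiv.mulLeft₀_apply, Equiv.coe_addRight]
  rw [discrim]
  constructor
  · intro h
    linear_combination 4 * a * h
  · intro h
    have h' : 2 * (2 * a) * (a * x ^ 2 + b * x + c) = 0 := by linear_combination h
    exact (mul_eq_zero.1 h').resolve_left (mul_ne_zero h2 h2a)

end SquareRoots

section InverseMap

lemma pow_card_sub_two_eq_inv {F : Type*} [Field F] [Fintype F] (hF : Fintype.card F ≠ 2)
    (x : F) : x ^ (Fintype.card F - 2) = x⁻¹ := by
  have hq : 2 < Fintype.card F := lt_of_le_of_ne Fintype.one_lt_card hF.symm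
  rcases eq_or_ne x 0 with rfl | hx
  · rw [inv_zero, zero_pow (by omega)]
  · refine eq_inv_of_mul_eq_one_left ?_
    rw [← pow_succ, show Fintype.card F - 2 + 1 = Fintype.card F - 1 by omega,
      FiniteField.pow_card_sub_one_eq_one x hx]

lemma inv_add_one_sub_mul_inv_eq_iff {F : Type*} [Field F] {c b x : F} (hx : x ≠ 0)
    (hx' : x + 1 ≠ 0) : (x + 1)⁻¹ - c * x⁻¹ = b ↔ b * x ^ 2 + (b + c - 1) * x + c = 0 := by
  rw [sub_eq_iff_eq_add]
  field_simp
  constructor <;> intro h <;> linear_combination -h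

variable {F : Type*} [Field F] [Fintype F] [DecidableEq F]

lemma cdelta_card_sub_two (hF : Fintype.card F ≠ 2) (c b : F) :
    cdelta F (Fintype.card F - 2) c b = #{x : F | (x + 1)⁻¹ - c * x⁻¹ = b} := by
  simp only [cdelta, pow_card_sub_two_eq_inv hF, Nat.card_eq_fintype_card, Fintype.card_subtype]

lemma card_inv_add_one_sub_mul_inv_eq {c : F} (hc : c ≠ 0) (b : F) :
    #{x : F | (x + 1)⁻¹ - c * x⁻¹ = b} = #{x : F | b * x ^ 2 + (b + c - 1) * x + c = 0}
      + (if b = 1 then 1 else 0) + (if b = c then 1 else 0) := by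
  -- `x = 0` and `x = -1` are never roots of the quadratic; there `Δ_c` takes the values `1` and `c`
  have key : ∀ x : F, (if (x + 1)⁻¹ - c * x⁻¹ = b then 1 else 0)
      = (if b * x ^ 2 + (b + c - 1) * x + c = 0 then 1 else 0)
        + (if x = 0 then if b = 1 then 1 else 0 else 0)
        + (if x = -1 then if b = c then 1 else 0 else 0) := by
    intro x
    rcases eq_or_ne x 0 with rfl | hx
    · simp [hc, eq_comm]
    rcases eq_or_ne x (-1) with rfl | hx'
    · rw [show b * (-1) ^ 2 + (b + c - 1) * (-1) + c = (1 : F) by ring]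
      simp [eq_comm]
    have hx1 : x + 1 ≠ 0 := by contrapose! hx'; linear_combination hx'
    simp [inv_add_one_sub_mul_inv_eq_iff hx hx1, hx, hx']
  simp only [card_filter, key, sum_add_distrib, sum_ite_eq']
  simp

lemma cdelta_card_sub_two_of_ne_zero (hF : ringChar F ≠ 2) {c b : F} (hc : c ≠ 0)
    (hb : b ≠ 0) :
    cdelta F (Fintype.card F - 2) c b = numSqrts (discrim b (b + c - 1) c)
      + (if b = 1 then 1 else 0) + (if b = c then 1 else 0) := by
  have hq : Fintype.card F ≠ 2 := by have := FiniteField.odd_card_of_char_ne_two hF; omega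
  rw [cdelta_card_sub_two hq, card_inv_add_one_sub_mul_inv_eq hc,
    card_quadratic_roots (Ring.two_ne_zero hF) hb]

lemma cdelta_card_sub_two_zero (hF : ringChar F ≠ 2) {c : F} (hc0 : c ≠ 0) (hc1 : c ≠ 1) :
    cdelta F (Fintype.card F - 2) c 0 = 1 := by
  have hq : Fintype.card F ≠ 2 := by have := FiniteField.odd_card_of_char_ne_two hF; omega
  have hc1' : c - 1 ≠ 0 := sub_ne_zero.2 hc1
  rw [cdelta_card_sub_two hq, card_inv_add_one_sub_mul_inv_eq hc0, if_neg zero_ne_one,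
    if_neg hc0.symm, add_zero, add_zero, card_eq_one]
  refine ⟨-c / (c - 1), ext fun x => ?_⟩
  simp only [mem_filter_univ, mem_singleton, zero_mul, zero_add]
  rw [eq_div_iff hc1']
  constructor <;> intro h <;> linear_combination h

end InverseMap

section Spectrum

lemma comega_eq_card {F : Type*} [Field F] [Fintype F] (d : ℕ) (c : F) (i : ℕ) :
    comega F d c i = #{b : F | cdelta F d c b = i} := by
  simp only [comega, Nat.card_eq_fintype_card, Fintype.card_subtype]

lemma discrim_eq_sub_sq_sub {F : Type*} [Field F] (b c : F) :
    discrim b (b + c - 1) c = (b - (c + 1)) ^ 2 - 4 * c := by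
  rw [discrim]; ring

variable {F : Type*} [Field F] [Fintype F] [DecidableEq F]

lemma sum_cdelta (d : ℕ) (c : F) : ∑ b, cdelta F d c b = Fintype.card F := by
  simp only [cdelta, Nat.card_eq_fintype_card, Fintype.card_subtype]
  exact (card_eq_sum_card_fiberwise fun x _ => mem_univ _).symm

lemma sum_comp_cdelta_card_sub_two {M : Type*} [AddCommMonoid M] (hF : ringChar F ≠ 2) {c : F}
    (hc0 : c ≠ 0) (hc1 : c ≠ 1) (φ : ℕ → M) :
    ∑ b, φ (cdelta F (Fintype.card F - 2) c b)
        + (φ 2 + (φ (numSqrts (discrim 1 (1 + c - 1) c)) + φ (numSqrts (discrim c (c + c - 1) c))))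
      = ∑ b, φ (numSqrts (discrim b (b + c - 1) c))
        + (φ 1 + (φ (numSqrts (discrim 1 (1 + c - 1) c) + 1)
          + φ (numSqrts (discrim c (c + c - 1) c) + 1))) := by
  have hcompare := sum_add_sum_eq_of_eqOn_compl
    (u := fun b => φ (cdelta F (Fintype.card F - 2) c b))
    (v := fun b => φ (numSqrts (discrim b (b + c - 1) c))) {0, 1, c} fun b hb => by
      simp only [mem_insert, mem_singleton, not_or] at hb
      simp [cdelta_card_sub_two_of_ne_zero hF hc0 hb.1, hb.2.1, hb.2.2]
  have hD0 : numSqrts (discrim 0 (0 + c - 1) c) = 2 :=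
    numSqrts_of_isSquare hF (by rw [discrim]; simpa using sub_ne_zero.2 hc1)
      ⟨c - 1, by rw [discrim]; ring⟩
  rwa [sum_insert (by simp [hc0.symm]), sum_pair hc1.symm, sum_insert (by simp [hc0.symm]),
    sum_pair hc1.symm, cdelta_card_sub_two_zero hF hc0 hc1,
    cdelta_card_sub_two_of_ne_zero hF hc0 one_ne_zero, cdelta_card_sub_two_of_ne_zero hF hc0 hc0,
    hD0, if_pos rfl, if_pos rfl, if_neg hc1, if_neg (Ne.symm hc1)] at hcompare

lemma sum_numSqrts_discrim_add_one (hF : ringChar F ≠ 2) {c : F} (hc0 : c ≠ 0) (hc1 : c ≠ 1) :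
    ∑ b, numSqrts (discrim b (b + c - 1) c) + 1 = Fintype.card F := by
  have h := sum_comp_cdelta_card_sub_two hF hc0 hc1 id
  simp only [id, sum_cdelta] at h
  omega

lemma card_numSqrts_discrim_eq_one (hF : ringChar F ≠ 2) {c : F} (hc0 : c ≠ 0)
    (hc : IsSquare c) : #{b : F | numSqrts (discrim b (b + c - 1) c) = 1} = 2 := by
  obtain ⟨r, rfl⟩ := hc
  have h4 : (4 : F) ≠ 0 := by
    have h := pow_ne_zero 2 (Ring.two_ne_zero hF)
    norm_num at h
    exact h
  rw [← numSqrts_of_isSquare hF (mul_ne_zero h4 hc0) ⟨2 * r, by ring⟩, numSqrts]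
  refine card_equiv (Equiv.subRight (r * r + 1)) fun b => ?_
  simp only [mem_filter_univ, numSqrts_eq_one_iff hF, discrim_eq_sub_sq_sub,
    Equiv.subRight_apply, sub_eq_zero]

lemma card_numSqrts_discrim (hF : ringChar F ≠ 2) {c : F} (hc0 : c ≠ 0) (hc1 : c ≠ 1)
    (hc : IsSquare c) :
    2 * #{b : F | numSqrts (discrim b (b + c - 1) c) = 0} + 1 = Fintype.card F ∧
      #{b : F | numSqrts (discrim b (b + c - 1) c) = 1} = 2 ∧
      2 * #{b : F | numSqrts (discrim b (b + c - 1) c) = 2} + 3 = Fintype.card F := by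
  have hsum := sum_numSqrts_discrim_add_one hF hc0 hc1
  have hone := card_numSqrts_discrim_eq_one hF hc0 hc
  have hsum_split : ∑ b, numSqrts (discrim b (b + c - 1) c)
      = #{b : F | numSqrts (discrim b (b + c - 1) c) = 1}
        + 2 * #{b : F | numSqrts (discrim b (b + c - 1) c) = 2} := by
    simp only [card_filter, mul_sum, ← sum_add_distrib]
    refine sum_congr rfl fun b _ => ?_
    have := numSqrts_le_two hF (discrim b (b + c - 1) c)
    split_ifs <;> omega
  have hcard_split : Fintype.card F
      = #{b : F | numSqrts (discrim b (b + c - 1) c) = 0}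
        + #{b : F | numSqrts (discrim b (b + c - 1) c) = 1}
        + #{b : F | numSqrts (discrim b (b + c - 1) c) = 2} := by
    rw [← card_univ, card_eq_sum_ones, card_filter, card_filter, card_filter, ← sum_add_distrib,
      ← sum_add_distrib]
    refine sum_congr rfl fun b _ => ?_
    have := numSqrts_le_two hF (discrim b (b + c - 1) c)
    split_ifs <;> omega
  omega

lemma comega_card_sub_two_add (hF : ringChar F ≠ 2) {c : F} (hc0 : c ≠ 0) (hc1 : c ≠ 1)
    (hχ : quadraticChar F (c ^ 2 - 4 * c) * quadraticChar F (1 - 4 * c) = -1) (i : ℕ) :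
    comega F (Fintype.card F - 2) c i + (if i = 0 then 1 else 0) + 2 * (if i = 2 then 1 else 0)
      = #{b : F | numSqrts (discrim b (b + c - 1) c) = i} + 2 * (if i = 1 then 1 else 0)
        + (if i = 3 then 1 else 0) := by
  have h := sum_comp_cdelta_card_sub_two hF hc0 hc1 fun k => if k = i then (1 : ℕ) else 0
  rw [comega_eq_card]
  simp only [← card_filter] at h
  rw [show discrim 1 (1 + c - 1) c = c ^ 2 - 4 * c by rw [discrim]; ring,
    show discrim c (c + c - 1) c = 1 - 4 * c by rw [discrim]; ring] at h
  rcases numSqrts_eq_two_or_zero_of_quadraticChar_mul_eq_neg_one hF hχ with ⟨h1, hc⟩ | ⟨h1, hc⟩ <;>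
    rw [h1, hc] at h <;> split_ifs at h ⊢ <;> omega

lemma comega_card_sub_two (hF : ringChar F ≠ 2) {c : F} (hc0 : c ≠ 0) (hc1 : c ≠ 1)
    (hc : IsSquare c)
    (hχ : quadraticChar F (c ^ 2 - 4 * c) * quadraticChar F (1 - 4 * c) = -1) :
    comega F (Fintype.card F - 2) c 0 = (Fintype.card F - 3) / 2 ∧
    comega F (Fintype.card F - 2) c 1 = 4 ∧
    comega F (Fintype.card F - 2) c 2 = (Fintype.card F - 7) / 2 ∧
    comega F (Fintype.card F - 2) c 3 = 1 ∧
    ∀ i, 4 ≤ i → comega F (Fintype.card F - 2) c i = 0 := by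
  obtain ⟨hcard0, hcard1, hcard2⟩ := card_numSqrts_discrim hF hc0 hc1 hc
  have hω := comega_card_sub_two_add hF hc0 hc1 hχ
  have hcard_large (i : ℕ) (hi : 3 ≤ i) : #{b : F | numSqrts (discrim b (b + c - 1) c) = i} = 0 :=
    card_eq_zero.2 <| filter_eq_empty_iff.2 fun b _ => by
      have := numSqrts_le_two hF (discrim b (b + c - 1) c)
      omega
  refine ⟨?_, ?_, ?_, ?_, fun i hi => ?_⟩
  · have := hω 0
    norm_num at this
    omega
  · have := hω 1
    norm_num at this
    omega
  · have := hω 2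
    norm_num at this
    omega
  · have := hω 3
    norm_num [hcard_large 3 le_rfl] at this
    omega
  · have := hω i
    simp only [hcard_large i (by omega), if_neg (show i ≠ 0 by omega), if_neg (show i ≠ 1 by omega),
      if_neg (show i ≠ 2 by omega), if_neg (show i ≠ 3 by omega)] at this
    omega

end Spectrum

lemma chi_eq_quadraticChar {F : Type*} [Field F] [Fintype F] [DecidableEq F] (x : F) :
    chi F x = quadraticChar F x := by
  simp only [chi, quadraticChar_apply, quadraticCharFun]
  congr

theorem stmt_8_general (p n : ℕ) (hpodd : Odd p)
    (F : Type*) [Field F] [Fintype F] (hF : Fintype.card F = p ^ n)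
    (c : F) (hc0 : c ≠ 0) (hc1 : c ≠ 1)
    (h1 : chi F (c ^ 2 - 4 * c) * chi F (1 - 4 * c) = -1) (h3 : chi F c = 1) :
    comega F (p ^ n - 2) c 0 = (p ^ n - 3) / 2 ∧
    comega F (p ^ n - 2) c 1 = 4 ∧
    comega F (p ^ n - 2) c 2 = (p ^ n - 7) / 2 ∧
    comega F (p ^ n - 2) c 3 = 1 ∧
    ∀ i, 4 ≤ i → comega F (p ^ n - 2) c i = 0 := by
  classical
  have hchar : ringChar F ≠ 2 := fun h => by
    have := FiniteField.even_card_of_char_two h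
    rw [hF, Nat.even_iff.symm] at this
    exact Nat.not_even_iff_odd.2 hpodd.pow this
  simp only [chi_eq_quadraticChar] at h1 h3
  rw [← hF]
  exact comega_card_sub_two hchar hc0 hc1 ((quadraticChar_one_iff_isSquare hc0).1 h3) h1

theorem stmt_8 (p n : ℕ) (hp : p.Prime) (hpodd : Odd p) (hn : 1 ≤ n)
    (F : Type*) [Field F] [Fintype F] (hF : Fintype.card F = p ^ n)
    (c : F) (hc0 : c ≠ 0) (hc1 : c ≠ 1) (hc4 : c ≠ 4) (hc4i : c ≠ (4 : F)⁻¹)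
    (h1 : chi F (c ^ 2 - 4 * c) * chi F (1 - 4 * c) = -1) (h3 : chi F c = 1) :
    comega F (p ^ n - 2) c 0 = (p ^ n - 3) / 2 ∧
    comega F (p ^ n - 2) c 1 = 4 ∧
    comega F (p ^ n - 2) c 2 = (p ^ n - 7) / 2 ∧
    comega F (p ^ n - 2) c 3 = 1 ∧
    ∀ i, 4 ≤ i → comega F (p ^ n - 2) c i = 0 :=
  stmt_8_general p n hpodd F hF c hc0 hc1 h1 h3
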